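/- arXiv:1008.0828 — 4 statements merged into one kernel-verified Lean document; each statement's English description precedes it below -/
import Mathlib

section
/- The number of Dyck paths from (0,0) to (n,n) whose touch composition equals a given composition α of n is the product over i of the Catalan numbers C_{α_i - 1}. -/
open Finset MvPolynomial

noncomputable section

/-- Base field `F = ℚ(q)`. -/
abbrev F : Type := RatFunc ℚ

/-- The parameter `q`. -/
noncomputable def q : F := RatFunc.X

/-- The ring of symmetric functions `Λ = F[p₁, p₂, p₃, …]`, where the variable
`X k` represents the power sum `p_{k+1}`. -/
abbrev SymF : Type := MvPolynomial ℕ F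

/-- `pp k` is the power sum `p_k` for `k ≥ 1`. -/
noncomputable def pp (k : ℕ) : SymF := MvPolynomial.X (k - 1)

/-- Complete homogeneous symmetric functions, via Newton's identity
`(n+1) h_{n+1} = ∑_{k=1}^{n+1} p_k h_{n+1-k}`. -/
noncomputable def hN : ℕ → SymF
  | 0 => 1
  | n + 1 => ((n : F) + 1)⁻¹ • ∑ k ∈ Finset.range (n + 1), pp (k + 1) * hN (n - k)
  termination_by n => n
  decreasing_by omega

/-- Elementary symmetric functions, via Newton's identity
`(n+1) e_{n+1} = ∑_{k=1}^{n+1} (-1)^{k-1} p_k e_{n+1-k}`. -/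
noncomputable def eN : ℕ → SymF
  | 0 => 1
  | n + 1 => ((n : F) + 1)⁻¹ • ∑ k ∈ Finset.range (n + 1), ((-1 : F) ^ k) • (pp (k + 1) * eN (n - k))
  termination_by n => n
  decreasing_by omega

/-- `hh m = h_m` for `m ≥ 0` and `0` for `m < 0`. -/
noncomputable def hh (m : ℤ) : SymF := if 0 ≤ m then hN m.toNat else 0

/-- `ee m = e_m` for `m ≥ 0` and `0` for `m < 0`. -/
noncomputable def ee (m : ℤ) : SymF := if 0 ≤ m then eN m.toNat else 0

/-- The plethystic translation `f[X] ↦ f[X + (1-q)z]`, determined by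
`p_k ↦ p_k + (1-q^k) z^k`.  The coefficient of `z^r` computes `h_r[X(1-q)]^⊥ f`. -/
noncomputable def Tq : SymF →ₐ[F] Polynomial SymF :=
  MvPolynomial.aeval fun k =>
    Polynomial.C (MvPolynomial.X k) +
      Polynomial.C (MvPolynomial.C (1 - q ^ (k + 1))) * Polynomial.X ^ (k + 1)

/-- The operator `h_r[X(1-q)]^⊥`. -/
noncomputable def Dq (r : ℕ) (P : SymF) : SymF := (Tq P).coeff r

/-- The plethystic translation `f[X] ↦ f[X - z]`, determined by `p_k ↦ p_k - z^k`;
one has `f[X - z] = ∑_k (-z)^k (e_k^⊥ f)[X]`. -/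
noncomputable def T1 : SymF →ₐ[F] Polynomial SymF :=
  MvPolynomial.aeval fun k =>
    Polynomial.C (MvPolynomial.X k) - Polynomial.X ^ (k + 1)

/-- The operator `e_r^⊥`. -/
noncomputable def eperp (r : ℕ) (P : SymF) : SymF := ((-1 : F) ^ r) • (T1 P).coeff r

/-- The Hall–Littlewood creation operator
`ℂ_m P = (-1/q)^{m-1} ∑_{r ≥ 0} q^{-r} h_{m+r} · (h_r[X(1-q)])^⊥ P`
(the sum is finite: terms with `r > deg_z (Tq P)` vanish). -/
noncomputable def Cop (m : ℤ) (P : SymF) : SymF :=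
  ((-q⁻¹ : F) ^ (m - 1)) •
    ∑ r ∈ Finset.range ((Tq P).natDegree + 1), ((q⁻¹ : F) ^ r) • (hh (m + r) * Dq r P)

/-- The creation operator `𝔹_m P = ∑_{r ≥ 0} (-1)^r e_{m+r} · (h_r[X(1-q)])^⊥ P`. -/
noncomputable def Bop (m : ℤ) (P : SymF) : SymF :=
  ∑ r ∈ Finset.range ((Tq P).natDegree + 1), ((-1 : F) ^ r) • (ee (m + r) * Dq r P)

/-- The Bernstein (Schur) creation operator `S_m P = ∑_{r ≥ 0} (-1)^r h_{m+r} · e_r^⊥ P`. -/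
noncomputable def Sop (m : ℤ) (P : SymF) : SymF :=
  ∑ r ∈ Finset.range ((T1 P).natDegree + 1), ((-1 : F) ^ r) • (hh (m + r) * eperp r P)

/-- `C_α[X;q] = ℂ_{α₁} ℂ_{α₂} ⋯ ℂ_{α_ℓ}(1)`. -/
noncomputable def Cfun : List ℕ → SymF
  | [] => 1
  | a :: l => Cop a (Cfun l)

/-- `B_α[X;q] = 𝔹_{α_ℓ} 𝔹_{α_{ℓ-1}} ⋯ 𝔹_{α₁}(1)`. -/
noncomputable def Bfun (l : List ℕ) : SymF := l.foldl (fun acc a => Bop a acc) 1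

end

/-- The touch set `{0} ∪ Des(c)` of a composition `c` of `n`:
the set of partial sums `c₁ + ⋯ + c_i` for `0 ≤ i < ℓ(c)` (0-based touch rows). -/
def touchSet {n : ℕ} (c : Composition n) : Finset ℕ :=
  (Finset.range c.length).image fun i => c.sizeUpTo i

/-- The descent set of a composition: its proper nonzero partial sums. -/
def DesSet {n : ℕ} (c : Composition n) : Finset ℕ := (touchSet c).erase 0

/-- `Refines β α` means `β ≤ α`: `β` is finer than `α`, i.e. `Des(α) ⊆ Des(β)`. -/
abbrev Refines {n : ℕ} (β α : Composition n) : Prop := touchSet α ⊆ touchSet β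

/-- `doffC α β = doff_α(DP(β))` for `β ≤ α`:
`∑_{k=1}^{ℓ(α)} (ℓ(α)-k) r_k` where `r_k` is the number of parts of `β`
lying inside the `k`-th part of `α`. -/
def doffC {n : ℕ} (α β : Composition n) : ℕ :=
  ∑ k ∈ Finset.range α.length,
    (α.length - 1 - k) *
      ((touchSet β).filter fun s => α.sizeUpTo k ≤ s ∧ s < α.sizeUpTo (k + 1)).card

/-- The reversed composition. -/
def revC {n : ℕ} (c : Composition n) : Composition n :=
  ⟨c.blocks.reverse, fun hi => c.blocks_pos (List.mem_reverse.mp hi), by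
    rw [List.sum_reverse]; exact c.blocks_sum⟩

/-- A Dyck path from `(0,0)` to `(n,n)`, encoded by its arm sequence:
`arm i` is the number of cells between the path and the diagonal in row `i+1`
(rows are 0-indexed here). -/
structure DyckPath (n : ℕ) where
  arm : ℕ → ℕ
  arm_zero : 0 < n → arm 0 = 0
  arm_step : ∀ i, i + 1 < n → arm (i + 1) ≤ arm i + 1
  arm_outside : ∀ i, n ≤ i → arm i = 0

/-- `area(D) = ∑ᵢ aᵢ`. -/
def area {n : ℕ} (D : DyckPath n) : ℕ := ∑ i ∈ Finset.range n, D.arm i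

/-- `dinv(D) = #{(i,j) : i < j, aᵢ - aⱼ ∈ {0,1}}`. -/
def dinv {n : ℕ} (D : DyckPath n) : ℕ :=
  ((Finset.range n ×ˢ Finset.range n).filter fun p =>
      p.1 < p.2 ∧ (D.arm p.1 = D.arm p.2 ∨ D.arm p.1 = D.arm p.2 + 1)).card

/-- `IsTouch D α` says that `touch(D) = α`: the rows where the arm vanishes are
exactly the partial sums of `α`. -/
def IsTouch {n : ℕ} (D : DyckPath n) (α : Composition n) : Prop :=
  ∀ i < n, (D.arm i = 0 ↔ i ∈ touchSet α)

/-- `doff_α(D)`, for a path `D` whose touch composition refines `α`. -/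
def doffD {n : ℕ} (α : Composition n) (D : DyckPath n) : ℕ :=
  ∑ k ∈ Finset.range α.length,
    (α.length - 1 - k) *
      ((Finset.Ico (α.sizeUpTo k) (α.sizeUpTo (k + 1))).filter fun i => D.arm i = 0).card

instance {n : ℕ} : DecidableEq (Composition n) := fun a b =>
  decidable_of_iff (a.blocks = b.blocks) ⟨fun h => by cases a; cases b; simpa using h,
    fun h => by rw [h]⟩

noncomputable section

/-- Plethystic evaluation at the alphabet `1 - q`: the algebra map `p_k ↦ 1 - q^k`. -/
noncomputable def evOneMinusQ : SymF →ₐ[F] F := MvPolynomial.aeval fun k => 1 - q ^ (k + 1)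

/-- The cells of the Young diagram of a partition given as a (weakly decreasing)
list of parts: `(i, j)` with `j < lᵢ` (row `i`, column `j`, both 0-based). -/
def pcells (l : List ℕ) : Finset (ℕ × ℕ) :=
  (Finset.range l.length ×ˢ Finset.range (l.foldr max 0)).filter fun c => c.2 < l.getD c.1 0

/-- The arm of a cell: number of cells strictly to its right in its row. -/
def armC (l : List ℕ) (c : ℕ × ℕ) : ℕ := l.getD c.1 0 - c.2 - 1

/-- The leg of a cell: number of cells of the diagram in its column in later rows. -/
def legC (l : List ℕ) (c : ℕ × ℕ) : ℕ :=
  ((Finset.Ico (c.1 + 1) l.length).filter fun i => c.2 < l.getD i 0).card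

/-- The `k`-th part (`k ≥ 1`) of the conjugate partition: `μ'_k = #{i : μᵢ ≥ k}`. -/
def conjPart (l : List ℕ) (k : ℕ) : ℕ := l.countP fun x => k ≤ x

/-- The multiplicity `m_i(μ')` of `i` among the parts of the conjugate partition. -/
def mConj (l : List ℕ) (i : ℕ) : ℕ :=
  ((Finset.Icc 1 l.headI).filter fun k => conjPart l k = i).card

/-- `n(μ') = ∑ (k-1) μ'_k`. -/
def nConj (l : List ℕ) : ℕ := ∑ k ∈ Finset.Icc 1 l.headI, (k - 1) * conjPart l k

/-- The `q`-Pochhammer symbol `(q;q)_k = ∏_{j=1}^k (1 - q^j)` as an element of `F`. -/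
noncomputable def qpoch (k : ℕ) : F := ∏ j ∈ Finset.Icc 1 k, (1 - q ^ j)

end

/-! A path touches the diagonal in row `k + 1` for the first time exactly when it is `N A E B`
with `A` of size `k`; in arm sequences this reads `0, A + 1, B`. So the paths with touch
composition `(k + 1) :: γ` are the `N A E B` with `A` arbitrary and `touch B = γ`, which peels
off one factor `C_k`, and summing over the first return `k + 1` gives Catalan's recursion for
the number of all paths. -/

namespace DyckPath

variable {n : ℕ}

@[ext]
theorem ext {A B : DyckPath n} (h : ∀ i, A.arm i = B.arm i) : A = B := by
  cases A; cases B; simpa using funext h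

theorem arm_zero' (D : DyckPath n) : D.arm 0 = 0 := by
  rcases Nat.eq_zero_or_pos n with hn | hn
  · exact D.arm_outside 0 hn.le
  · exact D.arm_zero hn

theorem arm_le (D : DyckPath n) (i : ℕ) : D.arm i ≤ i := by
  induction i with
  | zero => simp [D.arm_zero']
  | succ i ih =>
    by_cases hi : i + 1 < n
    · have := D.arm_step i hi; omega
    · rw [D.arm_outside (i + 1) (by omega)]; omega

instance : Finite (DyckPath n) :=
  Finite.of_injective (fun D (i : Fin n) => (⟨D.arm i, (D.arm_le i).trans_lt i.isLt⟩ : Fin n))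
    fun A B h => ext fun i => by
      by_cases hi : i < n
      · exact congrArg Fin.val (congrFun h ⟨i, hi⟩)
      · rw [A.arm_outside i (by omega), B.arm_outside i (by omega)]

instance : Unique (DyckPath 0) where
  default := ⟨fun _ => 0, by omega, by omega, fun _ _ => rfl⟩
  uniq D := ext fun i => D.arm_outside i i.zero_le

def firstReturn (D : DyckPath n) : ℕ :=
  Nat.find (⟨n + 1, n.succ_pos, D.arm_outside _ (by omega)⟩ : ∃ k, 0 < k ∧ D.arm k = 0)

theorem firstReturn_eq_iff (D : DyckPath n) {k : ℕ} (hk : 0 < k) :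
    D.firstReturn = k ↔ D.arm k = 0 ∧ ∀ i, 0 < i → i < k → D.arm i ≠ 0 := by
  rw [firstReturn, Nat.find_eq_iff]
  simp only [hk, true_and, not_and]
  exact and_congr_right fun _ => ⟨fun h i hi hik => h i hik hi, fun h i hik hi => h i hi hik⟩

theorem firstReturn_pos (D : DyckPath n) : 0 < D.firstReturn :=
  (Nat.find_spec (p := fun k => 0 < k ∧ D.arm k = 0) _).1

theorem firstReturn_le (D : DyckPath n) (hn : 0 < n) : D.firstReturn ≤ n :=
  Nat.find_min' _ ⟨hn, D.arm_outside n le_rfl⟩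

variable {a b : ℕ}

/-- The path `N A E B`, in arm sequences: `0, A + 1, B`. -/
def liftAppend (A : DyckPath a) (B : DyckPath b) (h : a + 1 + b = n) : DyckPath n where
  arm i := if 0 < i ∧ i ≤ a then A.arm (i - 1) + 1 else B.arm (i - (a + 1))
  arm_zero _ := by simp [B.arm_zero']
  arm_step i hi := by
    by_cases hia : i + 1 ≤ a
    · rw [if_pos ⟨i.succ_pos, hia⟩]
      rcases Nat.eq_zero_or_pos i with rfl | hi0
      · simp [A.arm_zero']
      · rw [if_pos ⟨hi0, by omega⟩, show i + 1 - 1 = i - 1 + 1 by omega]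
        have := A.arm_step (i - 1) (by omega)
        omega
    · rw [if_neg (by omega)]
      by_cases hai : i + 1 = a + 1
      · simp [hai, B.arm_zero']
      · rw [show i + 1 - (a + 1) = i - (a + 1) + 1 by omega, if_neg (by omega)]
        exact B.arm_step _ (by omega)
  arm_outside i hi := by rw [if_neg (by omega)]; exact B.arm_outside _ (by omega)

def lowerPrefix (D : DyckPath n) (a : ℕ) (ha : a < n) : DyckPath a where
  arm i := if i < a then D.arm (i + 1) - 1 else 0
  arm_zero h := by
    have := D.arm_step 0 (by omega)
    rw [if_pos h, D.arm_zero'] at *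
    omega
  arm_step i hi := by
    have := D.arm_step (i + 1) (by omega)
    rw [if_pos hi, if_pos (by omega)]
    omega
  arm_outside i hi := if_neg (by omega)

def drop (D : DyckPath n) (k : ℕ) (hk : D.arm k = 0) (h : k + b = n) : DyckPath b where
  arm i := D.arm (k + i)
  arm_zero _ := hk
  arm_step i hi := D.arm_step (k + i) (by omega)
  arm_outside i hi := D.arm_outside _ (by omega)

theorem firstReturn_liftAppend (A : DyckPath a) (B : DyckPath b) (h : a + 1 + b = n) :
    (liftAppend A B h).firstReturn = a + 1 := by
  rw [firstReturn_eq_iff _ a.succ_pos]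
  refine ⟨by simp [liftAppend, B.arm_zero'], fun i hi hia => ?_⟩
  simp [liftAppend, hi, show i ≤ a by omega]

def firstReturnEquiv (h : a + 1 + b = n) :
    {D : DyckPath n // D.firstReturn = a + 1} ≃ DyckPath a × DyckPath b where
  toFun D := (lowerPrefix D.1 a (by omega),
    drop D.1 (a + 1) ((D.1.firstReturn_eq_iff a.succ_pos).1 D.2).1 h)
  invFun P := ⟨liftAppend P.1 P.2 h, firstReturn_liftAppend P.1 P.2 h⟩
  left_inv D := by
    obtain ⟨hret, hpos⟩ := (D.1.firstReturn_eq_iff a.succ_pos).1 D.2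
    ext i
    by_cases hi : 0 < i ∧ i ≤ a
    · have := hpos i hi.1 (by omega)
      simp only [liftAppend, lowerPrefix, if_pos hi, if_pos (show i - 1 < a by omega),
        show i - 1 + 1 = i by omega]
      omega
    · simp only [liftAppend, drop, if_neg hi]
      rcases Nat.eq_zero_or_pos i with rfl | hi0
      · simpa [D.1.arm_zero'] using hret
      · rw [show a + 1 + (i - (a + 1)) = i by omega]
  right_inv P := by
    ext i
    · by_cases hi : i < a
      · simp [lowerPrefix, liftAppend, hi]
      · simp [lowerPrefix, liftAppend, hi, P.1.arm_outside i (by omega)]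
    · simp only [drop, liftAppend]
      rw [if_neg (by omega)]
      congr 1
      omega

theorem card_eq_catalan (n : ℕ) : Nat.card (DyckPath n) = catalan n := by
  induction n using Nat.strong_induction_on with
  | _ n ih =>
  match n with
  | 0 => simp
  | m + 1 =>
    let f : DyckPath (m + 1) → Fin (m + 1) := fun D =>
      ⟨D.firstReturn - 1, by have := D.firstReturn_le m.succ_pos; omega⟩
    have fiber (i : Fin (m + 1)) :
        {D // f D = i} ≃ {D : DyckPath (m + 1) // D.firstReturn = i + 1} :=
      Equiv.subtypeEquivRight fun D => by
        have := D.firstReturn_pos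
        simp only [f, Fin.ext_iff]
        omega
    rw [Nat.card_congr (Equiv.sigmaFiberEquiv f).symm, Nat.card_sigma, catalan_succ]
    refine Finset.sum_congr rfl fun i _ => ?_
    rw [Nat.card_congr ((fiber i).trans (firstReturnEquiv (b := m - i) (by omega))),
      Nat.card_prod, ih i (by omega), ih (m - i) (by omega)]

end DyckPath

section Touch

open Composition

variable {m : ℕ}

theorem mem_touchSet {c : Composition m} {s : ℕ} :
    s ∈ touchSet c ↔ ∃ i < c.length, c.sizeUpTo i = s := by
  simp [touchSet]

theorem zero_mem_touchSet (c : Composition m) (hm : 0 < m) : 0 ∈ touchSet c :=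
  mem_touchSet.2 ⟨0, c.length_pos_of_pos hm, c.sizeUpTo_zero⟩

theorem mem_touchSet_single_append (k : ℕ) (c : Composition m) (s : ℕ) :
    s ∈ touchSet ((single (k + 1) k.succ_pos).append c) ↔
      s = 0 ∨ ∃ t ∈ touchSet c, s = k + 1 + t := by
  have hsize (i : ℕ) :
      ((single (k + 1) k.succ_pos).append c).sizeUpTo (i + 1) = k + 1 + c.sizeUpTo i := by
    simp [sizeUpTo]
  have hlen : ((single (k + 1) k.succ_pos).append c).length = c.length + 1 := by
    simp [Composition.length]
  simp only [mem_touchSet, hlen]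
  constructor
  · rintro ⟨_ | i, hi, rfl⟩
    · exact Or.inl (sizeUpTo_zero _)
    · exact Or.inr ⟨_, ⟨i, by omega, rfl⟩, hsize i⟩
  · rintro (rfl | ⟨_, ⟨i, hi, rfl⟩, rfl⟩)
    · exact ⟨0, by omega, sizeUpTo_zero _⟩
    · exact ⟨i + 1, by omega, hsize i⟩

theorem isTouch_single_append_iff {k : ℕ} {c : Composition m} {D : DyckPath (k + 1 + m)} :
    IsTouch D ((single (k + 1) k.succ_pos).append c) ↔
      D.firstReturn = k + 1 ∧ ∀ j < m, (D.arm (k + 1 + j) = 0 ↔ j ∈ touchSet c) := by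
  simp only [IsTouch, mem_touchSet_single_append, D.firstReturn_eq_iff k.succ_pos]
  constructor
  · intro hD
    have hsuffix (j : ℕ) (hj : j < m) : D.arm (k + 1 + j) = 0 ↔ j ∈ touchSet c := by
      rw [hD _ (by omega)]
      exact ⟨by rintro (h | ⟨t, ht, he⟩) <;> first | omega | rwa [show j = t by omega],
        fun hj => Or.inr ⟨j, hj, rfl⟩⟩
    refine ⟨⟨?_, fun i hi hik hz => ?_⟩, hsuffix⟩
    · rcases Nat.eq_zero_or_pos m with rfl | hm
      · exact D.arm_outside _ le_rfl
      · simpa using (hsuffix 0 hm).2 (zero_mem_touchSet c hm)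
    · rcases (hD i (by omega)).1 hz with h | ⟨t, _, rfl⟩ <;> omega
  · rintro ⟨⟨-, hprefix⟩, hsuffix⟩ i hi
    rcases Nat.lt_or_ge i (k + 1) with hik | hik
    · rcases Nat.eq_zero_or_pos i with rfl | hi0
      · simp [D.arm_zero']
      · exact iff_of_false (hprefix i hi0 hik) (by rintro (h | ⟨t, _, rfl⟩) <;> omega)
    · obtain ⟨j, rfl⟩ := Nat.exists_eq_add_of_le hik
      rw [hsuffix j (by omega)]
      exact ⟨fun hj => Or.inr ⟨j, hj, rfl⟩,
        by rintro (h | ⟨t, ht, he⟩) <;> first | omega | rwa [show j = t by omega]⟩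

theorem card_isTouch_single_append (k : ℕ) (c : Composition m) :
    Nat.card {D : DyckPath (k + 1 + m) // IsTouch D ((single (k + 1) k.succ_pos).append c)} =
      catalan k * Nat.card {B : DyckPath m // IsTouch B c} := by
  let e := DyckPath.firstReturnEquiv (a := k) (b := m) rfl
  -- `(e x).2` is `drop`, so `IsTouch (e x).2 c` unfolds to the suffix condition above.
  calc _ = Nat.card {x : {D : DyckPath (k + 1 + m) // D.firstReturn = k + 1} //
          IsTouch (e x).2 c} :=
        Nat.card_congr ((Equiv.subtypeEquivRight fun _ => isTouch_single_append_iff).trans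
          (Equiv.subtypeSubtypeEquivSubtypeInter _ _).symm)
    _ = Nat.card {p : DyckPath k × DyckPath m // IsTouch p.2 c} :=
        Nat.card_congr (e.subtypeEquiv fun _ => Iff.rfl)
    _ = Nat.card ({B : DyckPath m // IsTouch B c} × DyckPath k) :=
        Nat.card_congr (((Equiv.prodComm _ _).subtypeEquiv
          (q := fun p : DyckPath m × DyckPath k => IsTouch p.1 c) fun _ => Iff.rfl).trans
            (Equiv.prodSubtypeFstEquivSubtypeProd (p := fun B => IsTouch B c)))
    _ = _ := by rw [Nat.card_prod, DyckPath.card_eq_catalan, mul_comm]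

end Touch

/-- the number of Dyck paths from `(0,0)` to `(n,n)` whose touch
composition equals a given composition `α` of `n` is `∏ᵢ C_{αᵢ - 1}`. -/
theorem stmt0 (n : ℕ) (α : Composition n) :
    Nat.card {D : DyckPath n // IsTouch D α} =
      (α.blocks.map fun a => catalan (a - 1)).prod := by
  induction α using Composition.recOnSingleAppend with
  | zero =>
    have hall (D : DyckPath 0) : IsTouch D (Composition.ones 0) := fun i hi =>
      absurd hi i.not_lt_zero
    simp [Nat.card_congr (Equiv.subtypeUnivEquiv hall)]
  | single_append k m c ih =>
    simp [card_isTouch_single_append, ih]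
end

section
/- For a partition μ of n, ∏_{c∈μ, l(c)=0}(1 - q^{a(c)+1}) · ∏_{c∈μ, l(c)≠0}(- q^{a(c)+1}) = (-1)^{n-μ_1} q^{n + n(μ') - M(μ')} ∏_{i=1}^{n} (q;q)_{m_i(μ')}, where n(λ) = Σ (i-1)λ_i, M(λ) = Σ_i binom(m_i(λ)+1, 2), m_i(λ) is the number of parts of λ equal to i, and (q;q)_k = ∏_{j=1}^{k}(1-q^j). -/
open Finset MvPolynomial

/-!
Induct on the rows, peeling off the longest row `a` of `μ = a :: t`. The cell of that row in
column `j` has arm `a - 1 - j` and a vanishing leg exactly when `j ≥ t₁`, so the row contributes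
`(-1)^{t₁} q^{∑_{j<t₁} (a-j)} (q;q)_{a-t₁}`. Adding the row `a` raises the first `a` parts of the
conjugate by one: `m₁(μ') = a - t₁`, `m_{i+1}(μ') = m_i(t')` and `n(μ') = n(t') + binom(a, 2)`.
The exponents then match because `∑_{j<t₁} (a-j) + binom(a-t₁+1, 2) = binom(a+1, 2)`.
-/

namespace List

variable {l : List ℕ}

theorem le_headI_of_mem (hs : l.Pairwise (· ≥ ·)) {x : ℕ} (hx : x ∈ l) : x ≤ l.headI := by
  cases l with
  | nil => simp at hx
  | cons a t =>
    rcases mem_cons.mp hx with rfl | h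
    · rfl
    · exact (pairwise_cons.mp hs).1 x h

theorem headI_le_iff (hs : l.Pairwise (· ≥ ·)) {j : ℕ} : l.headI ≤ j ↔ ∀ x ∈ l, x ≤ j := by
  refine ⟨fun h x hx => (le_headI_of_mem hs hx).trans h, fun h => ?_⟩
  cases l with
  | nil => simp
  | cons a t => exact h a mem_cons_self

theorem headI_le_of_pairwise_cons {a : ℕ} {t : List ℕ} (hs : (a :: t).Pairwise (· ≥ ·)) :
    t.headI ≤ a :=
  (headI_le_iff (pairwise_cons.mp hs).2).mpr (pairwise_cons.mp hs).1

end List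

theorem mem_pcells {l : List ℕ} {c : ℕ × ℕ} :
    c ∈ pcells l ↔ c.1 < l.length ∧ c.2 < l.getD c.1 0 := by
  simp only [pcells, mem_filter, mem_product, mem_range, and_congr_left_iff, and_iff_left_iff_imp]
  intro hj hi
  exact hj.trans_le (List.le_max_of_le' 0 (List.getElem_mem hi) (List.getD_eq_getElem _ _ hi).le)

theorem prod_pcells {M : Type*} [CommMonoid M] (l : List ℕ) (f : ℕ × ℕ → M) :
    ∏ c ∈ pcells l, f c = ∏ i ∈ range l.length, ∏ j ∈ range (l.getD i 0), f (i, j) :=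
  prod_finset_product _ _ _ fun _ => by simp only [mem_pcells, mem_range]

theorem prod_pcells_cons {M : Type*} [CommMonoid M] (a : ℕ) (t : List ℕ) (f : ℕ × ℕ → M) :
    ∏ c ∈ pcells (a :: t), f c = (∏ j ∈ range a, f (0, j)) * ∏ c ∈ pcells t, f (c.1 + 1, c.2) := by
  rw [prod_pcells, prod_pcells, List.length_cons, prod_range_succ', mul_comm]
  simp only [List.getD_cons_zero, List.getD_cons_succ]

theorem armC_cons_zero (a : ℕ) (t : List ℕ) (j : ℕ) : armC (a :: t) (0, j) = a - j - 1 := rfl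

theorem armC_cons_succ (a : ℕ) (t : List ℕ) (i j : ℕ) : armC (a :: t) (i + 1, j) = armC t (i, j) :=
  rfl

theorem legC_cons (a : ℕ) (t : List ℕ) (i j : ℕ) :
    legC (a :: t) (i, j) = #{x ∈ Ico i t.length | j < t.getD x 0} := by
  rw [legC, List.length_cons, ← map_add_right_Ico, filter_map, card_map]
  rfl

theorem legC_cons_succ (a : ℕ) (t : List ℕ) (i j : ℕ) : legC (a :: t) (i + 1, j) = legC t (i, j) :=
  legC_cons a t (i + 1) j

theorem legC_cons_zero_eq_zero_iff {t : List ℕ} (hs : t.Pairwise (· ≥ ·)) (a j : ℕ) :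
    legC (a :: t) (0, j) = 0 ↔ t.headI ≤ j := by
  simp only [legC_cons, card_eq_zero, filter_eq_empty_iff, mem_Ico, not_lt, List.headI_le_iff hs,
    List.forall_mem_iff_getElem]
  refine ⟨fun h i hi => ?_, fun h i hi => ?_⟩
  · rw [← List.getD_eq_getElem _ 0 hi]
    exact h ⟨Nat.zero_le i, hi⟩
  · rw [List.getD_eq_getElem _ _ hi.2]
    exact h i hi.2

theorem q_ne_zero : q ≠ 0 := RatFunc.X_ne_zero

/-- The factor `t ^ l(c) - q ^ (a(c) + 1)` of `h̃'_μ(q, t)` at `t = 0`. -/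
noncomputable def hookAtZero (l : List ℕ) (c : ℕ × ℕ) : F := 0 ^ legC l c - q ^ (armC l c + 1)

theorem hookAtZero_cons_succ (a : ℕ) (t : List ℕ) (i j : ℕ) :
    hookAtZero (a :: t) (i + 1, j) = hookAtZero t (i, j) := by
  rw [hookAtZero, hookAtZero, legC_cons_succ, armC_cons_succ]

theorem prod_filter_legC_mul_prod_filter_legC_ne (l : List ℕ) :
    (∏ c ∈ pcells l with legC l c = 0, (1 - q ^ (armC l c + 1))) *
        ∏ c ∈ pcells l with legC l c ≠ 0, (-(q ^ (armC l c + 1))) =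
      ∏ c ∈ pcells l, hookAtZero l c := by
  rw [← prod_filter_mul_prod_filter_not (pcells l) (fun c => legC l c = 0)]
  congr 1 <;> refine prod_congr rfl fun c hc => ?_
  · rw [hookAtZero, (mem_filter.mp hc).2, pow_zero]
  · rw [hookAtZero, zero_pow (mem_filter.mp hc).2, zero_sub]

theorem prod_range_hookAtZero_cons {a : ℕ} {t : List ℕ} (hs : t.Pairwise (· ≥ ·))
    (hta : t.headI ≤ a) :
    ∏ j ∈ range a, hookAtZero (a :: t) (0, j) =
      (-1) ^ t.headI * q ^ (∑ j ∈ range t.headI, (a - j)) * qpoch (a - t.headI) := by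
  have hleg : ∀ j, legC (a :: t) (0, j) = 0 ↔ t.headI ≤ j := legC_cons_zero_eq_zero_iff hs a
  have harm : ∀ j < a, armC (a :: t) (0, j) + 1 = a - j := fun j hj => by
    rw [armC_cons_zero]; omega
  have hlegged : ∀ j ∈ range t.headI, hookAtZero (a :: t) (0, j) = -1 * q ^ (a - j) := by
    intro j hj
    have hj := mem_range.mp hj
    rw [hookAtZero, zero_pow (by rw [Ne, hleg]; omega), harm j (by omega)]
    ring
  have hlegless : ∀ j ∈ Ico t.headI a, hookAtZero (a :: t) (0, j) = 1 - q ^ (a - j) := by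
    intro j hj
    have hj := mem_Ico.mp hj
    rw [hookAtZero, (hleg j).mpr hj.1, pow_zero, harm j hj.2]
  rw [← prod_range_mul_prod_Ico _ hta, prod_congr rfl hlegged, prod_congr rfl hlegless,
    prod_mul_distrib, prod_const, card_range, prod_pow_eq_pow_sum,
    prod_Ico_reflect (fun j => 1 - q ^ j) _ (by omega), qpoch, ← Ico_add_one_right_eq_Icc]
  congr 3 <;> omega

theorem prod_pcells_hookAtZero_cons {a : ℕ} {t : List ℕ} (hs : (a :: t).Pairwise (· ≥ ·)) :
    ∏ c ∈ pcells (a :: t), hookAtZero (a :: t) c =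
      (-1) ^ t.headI * q ^ (∑ j ∈ range t.headI, (a - j)) * qpoch (a - t.headI) *
        ∏ c ∈ pcells t, hookAtZero t c := by
  rw [prod_pcells_cons,
    prod_range_hookAtZero_cons (List.pairwise_cons.mp hs).2 (List.headI_le_of_pairwise_cons hs)]
  simp only [hookAtZero_cons_succ]

theorem conjPart_cons (a : ℕ) (t : List ℕ) (k : ℕ) :
    conjPart (a :: t) k = conjPart t k + if k ≤ a then 1 else 0 := by
  simp [conjPart, List.countP_cons]

theorem conjPart_eq_zero_iff {t : List ℕ} (hs : t.Pairwise (· ≥ ·)) {k : ℕ} (hk : 0 < k) :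
    conjPart t k = 0 ↔ t.headI < k := by
  rw [conjPart, List.countP_eq_zero, Nat.lt_iff_le_pred hk, List.headI_le_iff hs]
  exact forall₂_congr fun x _ => by simp only [decide_eq_true_eq]; omega

theorem conjPart_le_sum (l : List ℕ) {k : ℕ} (hk : 0 < k) : conjPart l k ≤ l.sum := by
  induction l with
  | nil => simp [conjPart]
  | cons a t ih =>
    rw [conjPart_cons, List.sum_cons]
    split_ifs <;> omega

theorem mConj_eq_zero_of_sum_lt {l : List ℕ} {i : ℕ} (hi : l.sum < i) : mConj l i = 0 := by
  rw [mConj, card_eq_zero, filter_eq_empty_iff]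
  intro k hk
  have := conjPart_le_sum l (mem_Icc.mp hk).1
  omega

theorem mConj_cons_one {a : ℕ} {t : List ℕ} (hs : (a :: t).Pairwise (· ≥ ·)) :
    mConj (a :: t) 1 = a - t.headI := by
  have hts := (List.pairwise_cons.mp hs).2
  rw [mConj, List.headI_cons, ← Nat.card_Ioc]
  congr 1
  ext k
  simp only [mem_filter, mem_Icc, mem_Ioc, conjPart_cons]
  constructor
  · rintro ⟨⟨hk, hka⟩, h⟩
    rw [if_pos hka, add_eq_right, conjPart_eq_zero_iff hts hk] at h
    exact ⟨h, hka⟩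
  · rintro ⟨htk, hka⟩
    have hk : 0 < k := by omega
    rw [if_pos hka, (conjPart_eq_zero_iff hts hk).mpr htk]
    exact ⟨⟨hk, hka⟩, rfl⟩

theorem mConj_cons_succ {a : ℕ} {t : List ℕ} (hs : (a :: t).Pairwise (· ≥ ·)) {i : ℕ}
    (hi : i ≠ 0) : mConj (a :: t) (i + 1) = mConj t i := by
  have hts := (List.pairwise_cons.mp hs).2
  have hha := List.headI_le_of_pairwise_cons hs
  rw [mConj, mConj, List.headI_cons]
  congr 1
  ext k
  simp only [mem_filter, mem_Icc, conjPart_cons]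
  constructor
  · rintro ⟨⟨hk, hka⟩, h⟩
    rw [if_pos hka, add_left_inj] at h
    refine ⟨⟨hk, ?_⟩, h⟩
    by_contra! htk
    exact hi (h ▸ (conjPart_eq_zero_iff hts hk).mpr htk)
  · rintro ⟨⟨hk, hkt⟩, h⟩
    rw [if_pos (hkt.trans hha), h]
    exact ⟨⟨hk, hkt.trans hha⟩, rfl⟩

theorem nConj_cons {a : ℕ} {t : List ℕ} (hs : (a :: t).Pairwise (· ≥ ·)) :
    nConj (a :: t) = a.choose 2 + nConj t := by
  have hts := (List.pairwise_cons.mp hs).2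
  have hha := List.headI_le_of_pairwise_cons hs
  have hsplit : ∀ k ∈ Icc 1 a, (k - 1) * conjPart (a :: t) k = (k - 1) + (k - 1) * conjPart t k :=
    fun k hk => by rw [conjPart_cons, if_pos (mem_Icc.mp hk).2]; ring
  have hgauss : ∑ k ∈ Icc 1 a, (k - 1) = a.choose 2 := by
    rw [← Ico_add_one_right_eq_Icc, sum_Ico_eq_sum_range, Nat.choose_two_right,
      ← sum_range_id]
    simp
  have htail : ∑ k ∈ Icc 1 a, (k - 1) * conjPart t k = nConj t := by
    refine (sum_subset (Icc_subset_Icc_right hha) fun k hk hkt => ?_).symm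
    have hk := mem_Icc.mp hk
    rw [(conjPart_eq_zero_iff hts hk.1).mpr (by simp_all), mul_zero]
  rw [nConj, List.headI_cons, sum_congr rfl hsplit, sum_add_distrib, hgauss, htail]

@[to_additive]
theorem prod_Icc_one_add_one {M : Type*} [CommMonoid M] (N : ℕ) (f : ℕ → M) :
    ∏ i ∈ Icc 1 (N + 1), f i = f 1 * ∏ i ∈ Icc 1 N, f (i + 1) := by
  rw [← Ico_add_one_right_eq_Icc, prod_eq_prod_Ico_succ_bot (by omega),
    ← Ico_add_one_right_eq_Icc, prod_Ico_add']

@[to_additive sum_Icc_mConj_of_sum_le]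
theorem prod_Icc_mConj_of_sum_le {M : Type*} [CommMonoid M] {g : ℕ → M} (hg : g 0 = 1)
    {l : List ℕ} {N : ℕ} (hN : l.sum ≤ N) :
    ∏ i ∈ Icc 1 N, g (mConj l i) = ∏ i ∈ Icc 1 l.sum, g (mConj l i) := by
  refine (prod_subset (Icc_subset_Icc_right hN) fun i hi hil => ?_).symm
  rw [mConj_eq_zero_of_sum_lt (by simp_all), hg]

@[to_additive sum_Icc_mConj_cons]
theorem prod_Icc_mConj_cons {M : Type*} [CommMonoid M] {g : ℕ → M} (hg : g 0 = 1)
    {a : ℕ} {t : List ℕ} (hs : (a :: t).Pairwise (· ≥ ·)) :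
    ∏ i ∈ Icc 1 (a + t.sum), g (mConj (a :: t) i) =
      g (a - t.headI) * ∏ i ∈ Icc 1 t.sum, g (mConj t i) := by
  have hsum : (a :: t).sum = a + t.sum := List.sum_cons
  rw [← hsum, ← prod_Icc_mConj_of_sum_le hg (Nat.le_succ _), prod_Icc_one_add_one,
    mConj_cons_one hs, hsum, prod_congr rfl fun i hi => by
      rw [mConj_cons_succ hs (by simp_all; omega)],
    prod_Icc_mConj_of_sum_le hg (by omega)]

theorem Nat.add_one_choose_two (n : ℕ) : (n + 1).choose 2 = n + n.choose 2 := by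
  rw [Nat.choose_succ_succ', Nat.choose_one_right]

theorem sum_range_sub_add_choose_two {h a : ℕ} (hha : h ≤ a) :
    ∑ j ∈ range h, (a - j) + (a - h + 1).choose 2 = (a + 1).choose 2 := by
  induction h with
  | zero => simp
  | succ h ih =>
    have hstep := Nat.add_one_choose_two (a - (h + 1) + 1)
    rw [show a - (h + 1) + 1 + 1 = a - h + 1 by omega] at hstep
    rw [sum_range_succ]
    have := ih (by omega)
    omega

theorem stmt10_general (n : ℕ) (l : List ℕ) (hs : l.Pairwise (· ≥ ·))
    (hn : l.sum = n) :
    (∏ c ∈ (pcells l).filter fun c => legC l c = 0, (1 - q ^ (armC l c + 1))) *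
        ∏ c ∈ (pcells l).filter fun c => legC l c ≠ 0, (-(q ^ (armC l c + 1))) =
      ((-1 : F) ^ (n - l.headI)) *
        q ^ ((n : ℤ) + (nConj l : ℤ) -
          (∑ i ∈ Finset.Icc 1 n, (mConj l i + 1).choose 2 : ℕ)) *
        ∏ i ∈ Finset.Icc 1 n, qpoch (mConj l i) := by
  subst hn
  rw [prod_filter_legC_mul_prod_filter_legC_ne]
  induction l with
  | nil => simp [pcells, nConj]
  | cons a t ih =>
    have hha := List.headI_le_of_pairwise_cons hs
    have hsign : a + t.sum - a = t.headI + (t.sum - t.headI) := by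
      have := t.headI_le_sum
      omega
    have hexp : ((a + t.sum : ℕ) : ℤ) + ((a.choose 2 + nConj t : ℕ) : ℤ) -
          (((a - t.headI + 1).choose 2 + ∑ i ∈ Icc 1 t.sum, (mConj t i + 1).choose 2 : ℕ) : ℤ) =
        (∑ j ∈ range t.headI, (a - j) : ℕ) + ((t.sum : ℤ) + (nConj t : ℤ) -
          (∑ i ∈ Icc 1 t.sum, (mConj t i + 1).choose 2 : ℕ)) := by
      have := (sum_range_sub_add_choose_two hha).trans (Nat.add_one_choose_two a)
      omega
    rw [prod_pcells_hookAtZero_cons hs, ih (List.pairwise_cons.mp hs).2, List.sum_cons, List.headI_cons, nConj_cons hs,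
      prod_Icc_mConj_cons (by simp [qpoch]) hs,
      sum_Icc_mConj_cons (g := fun m => (m + 1).choose 2) rfl hs,
      hsign, pow_add, hexp, zpow_add₀ q_ne_zero, zpow_natCast]
    ring

/-- for a partition `μ` of `n` (a weakly decreasing list of positive
parts),
`∏_{c∈μ, l(c)=0}(1 - q^{a(c)+1}) ∏_{c∈μ, l(c)≠0}(- q^{a(c)+1})
  = (-1)^{n-μ₁} q^{n + n(μ') - M(μ')} ∏_{i=1}^n (q;q)_{m_i(μ')}`. -/
theorem stmt10 (n : ℕ) (l : List ℕ) (hs : l.Pairwise (· ≥ ·)) (hp : ∀ x ∈ l, 0 < x)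
    (hn : l.sum = n) :
    (∏ c ∈ (pcells l).filter fun c => legC l c = 0, (1 - q ^ (armC l c + 1))) *
        ∏ c ∈ (pcells l).filter fun c => legC l c ≠ 0, (-(q ^ (armC l c + 1))) =
      ((-1 : F) ^ (n - l.headI)) *
        q ^ ((n : ℤ) + (nConj l : ℤ) -
          (∑ i ∈ Finset.Icc 1 n, (mConj l i + 1).choose 2 : ℕ)) *
        ∏ i ∈ Finset.Icc 1 n, qpoch (mConj l i) :=
  stmt10_general n l hs hn
end

section
/- The Hall–Littlewood creation operators C_m defined by C_m P[X] = (-1/q)^{m-1} Σ_{r≥0} q^{-r} h_{m+r}[X] · (h_r[X(1-q)])^⊥ P[X] satisfy the commutation relation q C_m C_n - C_{m+1} C_{n-1} = C_n C_m - q C_{n-1} C_{m+1} for all integers m, n. -/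
open Finset MvPolynomial

/-!
Write `Dᵣ = h_r[X(1-q)]^⊥`, so that `f[X + (1-q)z] = Σ_r (Dᵣ f) zʳ`. The `Dᵣ` commute, since
`f[X + (1-q)z + (1-q)w]` is symmetric in `z` and `w`. With `H(t) = Σ_a h_a tᵃ` one has
`Σ_a h_a[X + (1-q)z] tᵃ = H(t) (1 - qzt) / (1 - zt)`: after clearing denominators both sides solve
the same linear differential equation in `t` (Newton's identity `H' = (Σ_k p_{k+1} tᵏ) H`,
transported by the translation) and have the same constant term. Read coefficientwise, this is the
commutation rule `D_{r+1} h_a = h_a D_{r+1} + D_r h_{a-1} - q h_{a-1} D_r`, with which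
`q ℂ_m ℂ_n - ℂ_{m+1} ℂ_{n-1}` telescopes to
`(-1/q)^{m+n-2} q Σ_{r,s} q^{-r-s} (h_{m+r} h_{n+s} - h_{m+r+1} h_{n+s-1}) D_r D_s`,
which changes sign under `(m, n, r, s) ↦ (n-1, m+1, s, r)`.
-/

namespace PowerSeries

variable {R S : Type*}

theorem derivative_map [CommSemiring R] [CommSemiring S] (φ : R →+* S) (f : R⟦X⟧) :
    d⁄dX S (map φ f) = map φ (d⁄dX R f) := by
  ext n
  simp [coeff_derivative]

theorem mk_pow_mul_one_sub_C_mul_X [CommRing R] (w : R) :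
    mk (fun n => w ^ n) * (1 - C w * X) = 1 := by
  simpa [rescale_mk, rescale_X] using congrArg (rescale w) (mk_one_mul_one_sub_eq_one R)

theorem coeff_succ_mul_one_sub_C_mul_X [CommRing R] (f : R⟦X⟧) (w : R) (n : ℕ) :
    coeff (n + 1) (f * (1 - C w * X)) = coeff (n + 1) f - w * coeff n f := by
  rw [mul_sub, mul_one, map_sub, show f * (C w * X) = C w * f * X by ring, coeff_succ_mul_X,
    coeff_C_mul]

theorem eq_zero_of_derivative_eq_mul [CommRing R] [IsAddTorsionFree R] {f g : R⟦X⟧}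
    (hf : d⁄dX R f = g * f) (h0 : constantCoeff f = 0) : f = 0 := by
  ext n
  induction n using Nat.strong_induction_on with
  | _ n ih =>
  rcases n with _ | k
  · simpa using h0
  · have hk : (k + 1) • coeff (k + 1) f = 0 := by
      rw [nsmul_eq_mul, mul_comm, Nat.cast_succ, ← coeff_derivative, hf, coeff_mul]
      refine Finset.sum_eq_zero fun p hp => ?_
      rw [ih p.2 (Finset.Nat.antidiagonal.snd_lt hp), map_zero, mul_zero]
    rw [map_zero]
    exact nsmul_right_injective (Nat.succ_ne_zero k) (by simpa using hk)

theorem mul_one_sub_C_mul_X_eq_of_derivative [CommRing R] [IsAddTorsionFree R] {f g a : R⟦X⟧}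
    (z w : R)
    (hf : d⁄dX R f = (a + C z * mk (fun k => z ^ k) - C w * mk (fun k => w ^ k)) * f)
    (hg : d⁄dX R g = a * g) (h0 : constantCoeff f = constantCoeff g) :
    f * (1 - C z * X) = g * (1 - C w * X) := by
  have hfz : d⁄dX R (f * (1 - C z * X)) =
      (a - C w * mk (fun k => w ^ k)) * (f * (1 - C z * X)) := by
    simp only [Derivation.leibniz, map_sub, Derivation.map_one_eq_zero, derivative_C,
      derivative_X, smul_eq_mul, hf]
    linear_combination (C z * f) * mk_pow_mul_one_sub_C_mul_X z
  have hgw : d⁄dX R (g * (1 - C w * X)) =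
      (a - C w * mk (fun k => w ^ k)) * (g * (1 - C w * X)) := by
    simp only [Derivation.leibniz, map_sub, Derivation.map_one_eq_zero, derivative_C,
      derivative_X, smul_eq_mul, hg]
    linear_combination (C w * g) * mk_pow_mul_one_sub_C_mul_X w
  refine sub_eq_zero.mp (eq_zero_of_derivative_eq_mul (g := a - C w * mk fun k => w ^ k) ?_ ?_)
  · rw [map_sub, hfz, hgw]
    ring
  · simp [h0]

end PowerSeries

open Polynomial.Bivariate in
theorem Polynomial.Bivariate.coeff_coeff_swap {R : Type*} [CommSemiring R] (p : R[X][Y])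
    (i j : ℕ) :
    ((swap p).coeff i).coeff j = (p.coeff j).coeff i := by
  induction p using Polynomial.induction_on' with
  | add p p' hp hp' => simp [hp, hp']
  | monomial n f =>
    induction f using Polynomial.induction_on' with
    | add f f' hf hf' => simp [hf, hf']
    | monomial m r =>
      rw [swap_monomial_monomial]
      simp only [Polynomial.coeff_monomial]
      split_ifs <;> simp [Polynomial.coeff_monomial, *]

theorem hN_zero : hN 0 = 1 := by rw [hN]

open PowerSeries in
theorem derivative_mk_hN :
    d⁄dX SymF (mk hN) = mk (fun k => pp (k + 1)) * mk hN := by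
  refine PowerSeries.ext fun n => ?_
  rw [coeff_derivative, PowerSeries.coeff_mul, Finset.Nat.sum_antidiagonal_eq_sum_range_succ_mk]
  have hn : ((n : SymF) + 1) = algebraMap F SymF ((n : F) + 1) := by simp
  simp only [coeff_mk]
  rw [hN, hn, mul_comm, ← Algebra.smul_def, smul_smul,
    mul_inv_cancel₀ (by exact_mod_cast n.succ_ne_zero), one_smul]

open PowerSeries in
theorem map_Tq_mk_pp :
    map (Tq : SymF →+* Polynomial SymF) (mk fun k => pp (k + 1)) =
      map Polynomial.C (mk fun k => pp (k + 1)) +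
        PowerSeries.C Polynomial.X * PowerSeries.mk (fun k => Polynomial.X ^ k) -
        PowerSeries.C (Polynomial.C (MvPolynomial.C q) * Polynomial.X) *
          PowerSeries.mk (fun k => (Polynomial.C (MvPolynomial.C q) * Polynomial.X) ^ k) := by
  refine PowerSeries.ext fun k => ?_
  rw [map_sub, map_add, PowerSeries.coeff_C_mul, PowerSeries.coeff_C_mul]
  simp only [Tq, map_sub, map_one, map_pow, pp, add_tsub_cancel_right, PowerSeries.coeff_map,
    coeff_mk, RingHom.coe_coe, aeval_X]
  ring

theorem smul_eq_C_C_mul (c : F) (f : Polynomial SymF) :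
    c • f = Polynomial.C (MvPolynomial.C c) * f := by
  rw [Algebra.smul_def, Polynomial.algebraMap_apply, MvPolynomial.algebraMap_eq]

open PowerSeries in
theorem Tq_hN_succ (n : ℕ) :
    Tq (hN (n + 1)) = Polynomial.C (hN (n + 1)) +
      Polynomial.X * (Tq (hN n) - q • Polynomial.C (hN n)) := by
  have h0 (φ : SymF →+* Polynomial SymF) : constantCoeff (map φ (mk hN)) = 1 := by
    rw [← coeff_zero_eq_constantCoeff_apply, PowerSeries.coeff_map, coeff_mk, hN_zero, map_one]
  have h := mul_one_sub_C_mul_X_eq_of_derivative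
    (f := map (Tq : SymF →+* Polynomial SymF) (mk hN)) (g := map Polynomial.C (mk hN)) _ _
    (by rw [derivative_map, derivative_mk_hN, map_mul, map_Tq_mk_pp])
    (by rw [derivative_map, derivative_mk_hN, map_mul]) (by rw [h0, h0])
  have := congrArg (PowerSeries.coeff (n + 1)) h
  simp only [coeff_succ_mul_one_sub_C_mul_X, PowerSeries.coeff_map, coeff_mk,
    RingHom.coe_coe] at this
  rw [smul_eq_C_C_mul]
  linear_combination this

theorem hh_of_neg {a : ℤ} (h : a < 0) : hh a = 0 := if_neg (by omega)

theorem hh_natCast (n : ℕ) : hh n = hN n := by simp [hh]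

theorem Tq_hh (a : ℤ) : Tq (hh a) = Polynomial.C (hh a) +
    Polynomial.X * (Tq (hh (a - 1)) - q • Polynomial.C (hh (a - 1))) := by
  rcases lt_or_ge a 0 with ha | ha
  · simp [hh_of_neg ha, hh_of_neg (by omega : a - 1 < 0)]
  lift a to ℕ using ha
  rcases a with _ | n
  · have h0 : hh 0 = 1 := by simp [hh, hN_zero]
    simp [h0, hh_of_neg (show (-1 : ℤ) < 0 by norm_num)]
  · rw [show ((n + 1 : ℕ) : ℤ) - 1 = n by push_cast; ring, hh_natCast, hh_natCast]
    exact Tq_hN_succ n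

theorem Dq_zero (P : SymF) : Dq 0 P = P := by
  induction P using MvPolynomial.induction_on with
  | C c => simp [Dq, Tq]
  | add p p' hp hp' => simp_all [Dq]
  | mul_X p k hp => simp_all [Dq, Tq]

theorem Dq_apply_zero (r : ℕ) : Dq r 0 = 0 := by simp [Dq]

theorem Dq_smul (r : ℕ) (c : F) (P : SymF) : Dq r (c • P) = c • Dq r P := by
  simp [Dq]

theorem Dq_sum {ι : Type*} (r : ℕ) (s : Finset ι) (f : ι → SymF) :
    Dq r (∑ i ∈ s, f i) = ∑ i ∈ s, Dq r (f i) := by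
  simp [Dq, Polynomial.finsetSum_coeff]

theorem Dq_eq_zero_of_natDegree_lt {r : ℕ} {P : SymF} (h : (Tq P).natDegree < r) : Dq r P = 0 :=
  Polynomial.coeff_eq_zero_of_natDegree_lt h

theorem Dq_succ_hh_mul (r : ℕ) (a : ℤ) (f : SymF) :
    Dq (r + 1) (hh a * f) =
      hh a * Dq (r + 1) f + Dq r (hh (a - 1) * f) - q • (hh (a - 1) * Dq r f) := by
  simp only [Dq, map_mul, Tq_hh a, add_mul, mul_assoc, sub_mul, Polynomial.coeff_add,
    Polynomial.coeff_C_mul, Polynomial.coeff_X_mul, Polynomial.coeff_sub, smul_mul_assoc,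
    Polynomial.coeff_smul, add_sub_assoc]

open Polynomial.Bivariate in
theorem Dq_comm (u s : ℕ) (P : SymF) : Dq u (Dq s P) = Dq s (Dq u P) := by
  set T2 : SymF →ₐ[F] SymF[X][Y] := (Polynomial.mapAlgHom Tq).comp Tq
  have hT2 : ∀ i j, Dq i (Dq j P) = ((T2 P).coeff j).coeff i := fun i j => by
    simp [T2, Dq, Polynomial.coeff_map]
  have hswap : (swap.toAlgHom.restrictScalars F).comp T2 = T2 := by
    refine MvPolynomial.algHom_ext fun k => ?_
    simp only [T2, Tq, AlgHom.comp_apply, MvPolynomial.aeval_X, AlgHom.restrictScalars_apply,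
      AlgEquiv.coe_toAlgHom, Polynomial.coe_mapAlgHom, Polynomial.map_C, Polynomial.map_X,
      map_add, map_mul, map_pow, swap_X, swap_Y, swap_C_C, RingHom.coe_coe, MvPolynomial.aeval_C,
      Polynomial.algebraMap_apply, MvPolynomial.algebraMap_eq]
    ring
  have hsym : swap (T2 P) = T2 P := AlgHom.congr_fun hswap P
  rw [hT2, hT2, ← coeff_coeff_swap, hsym]

noncomputable def creationSum (N : ℕ) (m : ℤ) (u : ℕ → SymF) : SymF :=
  ∑ r ∈ range N, (q⁻¹ : F) ^ r • (hh (m + r) * u r)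

section creationSum

variable {N : ℕ}

theorem creationSum_smul (m : ℤ) (c : F) (u : ℕ → SymF) :
    creationSum N m (fun r => c • u r) = c • creationSum N m u := by
  simp only [creationSum, smul_sum, mul_smul_comm, smul_comm c]

theorem creationSum_comm (a b : ℤ) (x : ℕ → ℕ → SymF) :
    creationSum N a (fun r => creationSum N b (x r)) =
      creationSum N b (fun s => creationSum N a (fun r => x r s)) := by
  simp only [creationSum, mul_sum, smul_sum, mul_smul_comm]
  rw [sum_comm]
  refine sum_congr rfl fun s _ => sum_congr rfl fun r _ => ?_
  rw [smul_comm, mul_left_comm]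

theorem q_smul_creationSum_sub_creationSum_add_one (m : ℤ) (u v : ℕ → SymF)
    (hu : u N = 0) :
    q • creationSum N m u - creationSum N (m + 1) v =
      q • (hh m * u 0) +
        ∑ r ∈ range N, (q⁻¹ : F) ^ r • (hh (m + r + 1) * (u (r + 1) - v r)) := by
  have hshift : creationSum N m u = hh m * u 0 +
      ∑ r ∈ range N, (q⁻¹ : F) ^ (r + 1) • (hh (m + r + 1) * u (r + 1)) := by
    rw [creationSum, ← add_zero (∑ r ∈ range N, _), ← smul_zero ((q⁻¹ : F) ^ N),
      ← mul_zero (hh (m + N)), ← hu,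
      ← sum_range_succ (fun r => (q⁻¹ : F) ^ r • (hh (m + r) * u r)), sum_range_succ']
    push_cast
    simp only [pow_zero, one_smul, add_zero, add_assoc, add_comm]
  rw [hshift, smul_add, creationSum, smul_sum, add_sub_assoc, ← sum_sub_distrib]
  refine congrArg _ (sum_congr rfl fun r _ => ?_)
  rw [smul_smul, pow_succ', ← mul_assoc, mul_inv_cancel₀ q_ne_zero, one_mul, add_right_comm m 1,
    mul_sub, smul_sub]

theorem Cop_eq_smul_creationSum (m : ℤ) {P : SymF} (h : (Tq P).natDegree < N) :
    Cop m P = (-q⁻¹ : F) ^ (m - 1) • creationSum N m (Dq · P) := by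
  rw [Cop, creationSum]
  refine congrArg _ (sum_subset (range_subset_range.mpr h) fun r _ hr => ?_)
  rw [mem_range, not_lt] at hr
  rw [Dq_eq_zero_of_natDegree_lt hr, mul_zero, smul_zero]

theorem Dq_succ_creationSum_sub (r : ℕ) (n : ℤ) (P : SymF) :
    Dq (r + 1) (creationSum N n (Dq · P)) - Dq r (creationSum N (n - 1) (Dq · P)) =
      creationSum N n (fun s => Dq s (Dq (r + 1) P)) -
        q • creationSum N (n - 1) (fun s => Dq s (Dq r P)) := by
  simp only [creationSum, Dq_sum, Dq_smul, Dq_succ_hh_mul, smul_sum, ← sum_sub_distrib]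
  refine sum_congr rfl fun s _ => ?_
  rw [show n + s - 1 = n - 1 + s by ring, Dq_comm s (r + 1), Dq_comm s r, smul_comm q]
  simp only [smul_sub, smul_add]
  abel

end creationSum

noncomputable def hlBracket (N : ℕ) (m n : ℤ) (P : SymF) : SymF :=
  creationSum N m (fun r => creationSum N n (fun s => Dq s (Dq r P))) -
    creationSum N (m + 1) (fun r => creationSum N (n - 1) (fun s => Dq s (Dq r P)))

section hlBracket

variable {N : ℕ}

theorem hlBracket_swap (m n : ℤ) (P : SymF) :
    hlBracket N (n - 1) (m + 1) P = -hlBracket N m n P := by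
  rw [hlBracket, hlBracket, creationSum_comm (n - 1), creationSum_comm (n - 1 + 1),
    sub_add_cancel, add_sub_cancel_right, neg_sub]
  simp only [Dq_comm _ _ P]

theorem q_smul_creationSum_sub_eq_hlBracket (m n : ℤ) {P : SymF} (hP : Dq N P = 0)
    (hn : Dq N (creationSum N n (Dq · P)) = 0) :
    q • creationSum N m (Dq · (creationSum N n (Dq · P))) -
        creationSum N (m + 1) (Dq · (creationSum N (n - 1) (Dq · P))) =
      q • hlBracket N m n P := by
  set u := fun r => creationSum N n (fun s => Dq s (Dq r P))
  set w := fun r => creationSum N (n - 1) (fun s => Dq s (Dq r P))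
  have hu : u N = 0 := by simp [u, hP, Dq_apply_zero, creationSum]
  calc _ = q • (hh m * u 0) +
        ∑ r ∈ range N, (q⁻¹ : F) ^ r • (hh (m + r + 1) * (u (r + 1) - q • w r)) := by
        rw [q_smul_creationSum_sub_creationSum_add_one m (Dq · _) _ hn]
        simp only [u, w, Dq_zero, Dq_succ_creationSum_sub]
    _ = q • creationSum N m u - creationSum N (m + 1) (fun r => q • w r) :=
        (q_smul_creationSum_sub_creationSum_add_one m u _ hu).symm
    _ = q • hlBracket N m n P := by rw [creationSum_smul, ← smul_sub, hlBracket]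

theorem Dq_creationSum_eq_zero (n : ℤ) {P : SymF} (hP : (Tq P).natDegree < N)
    (hn : (Tq (Cop n P)).natDegree < N) : Dq N (creationSum N n (Dq · P)) = 0 := by
  have h := Dq_eq_zero_of_natDegree_lt hn
  rw [Cop_eq_smul_creationSum n hP, Dq_smul] at h
  exact (smul_eq_zero.mp h).resolve_left
    (zpow_ne_zero _ (neg_ne_zero.mpr (inv_ne_zero q_ne_zero)))

theorem Cop_Cop_eq_smul (a b : ℤ) {P : SymF} (hP : (Tq P).natDegree < N)
    (hb : (Tq (Cop b P)).natDegree < N) :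
    Cop a (Cop b P) = ((-q⁻¹ : F) ^ (a - 1) * (-q⁻¹) ^ (b - 1)) •
      creationSum N a (Dq · (creationSum N b (Dq · P))) := by
  rw [Cop_eq_smul_creationSum a hb, Cop_eq_smul_creationSum b hP]
  simp only [Dq_smul, creationSum_smul, smul_smul]

theorem q_smul_Cop_Cop_sub (m n : ℤ) {P : SymF} (hP : (Tq P).natDegree < N)
    (hn : (Tq (Cop n P)).natDegree < N) (hn' : (Tq (Cop (n - 1) P)).natDegree < N) :
    q • Cop m (Cop n P) - Cop (m + 1) (Cop (n - 1) P) =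
      ((-q⁻¹ : F) ^ (m + n - 2) * q) • hlBracket N m n P := by
  have hq : (-q⁻¹ : F) ≠ 0 := neg_ne_zero.mpr (inv_ne_zero q_ne_zero)
  rw [Cop_Cop_eq_smul m n hP hn, Cop_Cop_eq_smul (m + 1) (n - 1) hP hn', ← zpow_add₀ hq,
    ← zpow_add₀ hq, show m - 1 + (n - 1) = m + n - 2 by ring,
    show m + 1 - 1 + (n - 1 - 1) = m + n - 2 by ring, smul_comm q, ← smul_sub,
    q_smul_creationSum_sub_eq_hlBracket m n (Dq_eq_zero_of_natDegree_lt hP)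
      (Dq_creationSum_eq_zero n hP hn), smul_smul]

end hlBracket

/-- the Hall–Littlewood creation operators `ℂ_m` satisfy
`q ℂ_m ℂ_n - ℂ_{m+1} ℂ_{n-1} = ℂ_n ℂ_m - q ℂ_{n-1} ℂ_{m+1}` for all `m, n ∈ ℤ`. -/
theorem stmt13 (m n : ℤ) (P : SymF) :
    q • Cop m (Cop n P) - Cop (m + 1) (Cop (n - 1) P) =
      Cop n (Cop m P) - q • Cop (n - 1) (Cop (m + 1) P) := by
  set N := (Tq P).natDegree + (Tq (Cop n P)).natDegree + (Tq (Cop (n - 1) P)).natDegree +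
    (Tq (Cop m P)).natDegree + (Tq (Cop (m + 1) P)).natDegree + 1
  have h := q_smul_Cop_Cop_sub (N := N) (P := P) m n (by omega) (by omega) (by omega)
  have h' := q_smul_Cop_Cop_sub (N := N) (P := P) (n - 1) (m + 1) (by omega) (by omega)
    (by rw [add_sub_cancel_right]; omega)
  rw [sub_add_cancel, add_sub_cancel_right, hlBracket_swap,
    show n - 1 + (m + 1) - 2 = m + n - 2 by ring] at h'
  rw [h, ← neg_sub (q • _), h', smul_neg, neg_neg]
end

section
/- The Bernstein creation operator S_m = Σ_{r≥0} (-1)^r h_{m+r}[X] e_r^⊥ expands in terms of the operators C_a as S_m = (-q)^{m-1} Σ_{i≥0} C_{m+i} e_i^⊥. -/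
open Finset MvPolynomial

/-!
Fix `m` and write `ev_c` for the umbral substitution `z^r ↦ c^r h_{m+r}` on `Λ[z]`. Then
`S_m P = ev_1 (P[X - z])`, while `(-q)^{m-1} C_{m+i} f = ev_{1/q} ((-z)^i f[X + (1-q)z])`.
As `(-1)^i e_i^⊥ P` is the `z^i`-coefficient of `P[X - z]`, the right-hand side is `ev_{1/q}` of
`P[X - z + (1-q)z] = P[X - qz]`, and `ev_{1/q}` undoes the dilation `z ↦ qz`.
-/

namespace Polynomial

variable {R A : Type*} [CommSemiring R] [CommSemiring A] [Algebra R A]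

def umbralEval (s : ℤ → A) (m : ℤ) (c : R) : A[X] →ₗ[R] A :=
  lsum fun r => c ^ r • LinearMap.mulLeft R (s (m + r))

variable (s : ℤ → A) (m : ℤ) (c : R)

theorem umbralEval_monomial (n : ℕ) (a : A) :
    umbralEval s m c (monomial n a) = c ^ n • (s (m + n) * a) := by
  simp [umbralEval, sum_monomial_index]

theorem umbralEval_eq_sum_range {g : A[X]} {N : ℕ} (hN : g.natDegree < N) :
    umbralEval s m c g = ∑ r ∈ Finset.range N, c ^ r • (s (m + r) * g.coeff r) := by
  rw [umbralEval, lsum_apply, sum_over_range' _ (fun _ => by simp) N hN]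
  rfl

theorem umbralEval_mul_X_pow (g : A[X]) (i : ℕ) :
    umbralEval s m c (g * X ^ i) = c ^ i • umbralEval s (m + i) c g := by
  induction g using Polynomial.induction_on' with
  | add g g' hg hg' => rw [add_mul, map_add, hg, hg', map_add, smul_add]
  | monomial n a =>
    rw [monomial_mul_X_pow, umbralEval_monomial, umbralEval_monomial, smul_smul, ← pow_add,
      add_comm i n]
    push_cast
    rw [add_assoc, add_comm (i : ℤ)]

theorem umbralEval_comp_C_mul_X (g : A[X]) (a : R) :
    umbralEval s m c (g.comp (C (algebraMap R A a) * X)) = umbralEval s m (c * a) g := by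
  induction g using Polynomial.induction_on' with
  | add g g' hg hg' => rw [add_comp, map_add, hg, hg', map_add]
  | monomial n b =>
    have hcomp : (monomial n b).comp (C (algebraMap R A a) * X) = monomial n (a ^ n • b) := by
      ext k
      rw [comp_C_mul_X_coeff, coeff_monomial, coeff_monomial]
      split_ifs with h
      · rw [h, Algebra.smul_def, map_pow, mul_comm]
      · rw [zero_mul]
    rw [hcomp, umbralEval_monomial, umbralEval_monomial, mul_smul_comm, smul_smul, mul_pow]

end Polynomial

open Polynomial (umbralEval umbralEval_eq_sum_range umbralEval_mul_X_pow umbralEval_comp_C_mul_X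
  eval₂_eq_sum_range)

open scoped Polynomial

theorem zpow_sub_one_mul_inv_zpow_add {G₀ : Type*} [GroupWithZero G₀] {a : G₀} (ha : a ≠ 0)
    (m : ℤ) (i : ℕ) :
    a ^ (m - 1) * a⁻¹ ^ (m + i - 1) = a⁻¹ ^ i := by
  rw [inv_zpow', ← zpow_add₀ ha, inv_pow, ← zpow_natCast, ← zpow_neg]
  ring_nf

theorem coeff_T1 (P : SymF) (i : ℕ) : (T1 P).coeff i = (-1 : F) ^ i • eperp i P := by
  rw [eperp, smul_smul, ← mul_pow, neg_mul_neg, one_mul, one_pow, one_smul]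

theorem Sop_eq_umbralEval (m : ℤ) (P : SymF) : Sop m P = umbralEval hh m (1 : F) (T1 P) := by
  rw [Sop, umbralEval_eq_sum_range hh m 1 (Nat.lt_succ_self _)]
  refine Finset.sum_congr rfl fun r _ => ?_
  rw [coeff_T1, one_pow, one_smul, mul_smul_comm]

theorem Cop_eq_umbralEval (m : ℤ) (P : SymF) :
    Cop m P = (-q⁻¹ : F) ^ (m - 1) • umbralEval hh m q⁻¹ (Tq P) := by
  rw [Cop, umbralEval_eq_sum_range hh m _ (Nat.lt_succ_self _)]
  rfl

theorem eval₂_Tq_T1 (P : SymF) :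
    (T1 P).eval₂ (Tq : SymF →+* SymF[X]) Polynomial.X =
      (T1 P).comp (Polynomial.C (algebraMap F SymF q) * Polynomial.X) := by
  have h : (Polynomial.eval₂RingHom (Tq : SymF →+* SymF[X]) Polynomial.X).comp T1.toRingHom =
      (Polynomial.compRingHom (Polynomial.C (algebraMap F SymF q) * Polynomial.X)).comp
        T1.toRingHom := by
    refine MvPolynomial.ringHom_ext (fun a => ?_) (fun k => ?_)
    · simp [T1, Tq]
    · simp only [T1, Tq, AlgHom.toRingHom_eq_coe, RingHom.coe_comp, RingHom.coe_coe,
        Function.comp_apply, aeval_X, Polynomial.coe_eval₂RingHom, Polynomial.eval₂_sub,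
        Polynomial.eval₂_C, Polynomial.eval₂_X_pow, Polynomial.coe_compRingHom,
        Polynomial.sub_comp, Polynomial.C_comp, Polynomial.pow_comp, Polynomial.X_comp,
        algebraMap_eq, map_sub, map_one, map_pow]
      ring
  exact RingHom.congr_fun h P

/-- the Bernstein creation operator expands as
`S_m = (-q)^{m-1} ∑_{i ≥ 0} ℂ_{m+i} e_i^⊥` (the sum is finite on each input:
terms with `i > deg_z(P[X-z])` vanish since `e_i^⊥ P = 0` there). -/
theorem stmt16 (m : ℤ) (P : SymF) :
    Sop m P =
      ((-q : F) ^ (m - 1)) •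
        ∑ i ∈ Finset.range ((T1 P).natDegree + 1), Cop (m + i) (eperp i P) := by
  have hq : q ≠ 0 := RatFunc.X_ne_zero
  have hterm : ∀ i : ℕ, (-q : F) ^ (m - 1) • Cop (m + i) (eperp i P) =
      umbralEval hh m q⁻¹ (Tq ((T1 P).coeff i) * Polynomial.X ^ i) := by
    intro i
    rw [Cop_eq_umbralEval, smul_smul, ← inv_neg, zpow_sub_one_mul_inv_zpow_add (neg_ne_zero.2 hq),
      umbralEval_mul_X_pow, coeff_T1, map_smul, map_smul, smul_smul, inv_neg, neg_pow, mul_comm]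
  calc Sop m P = umbralEval hh m (q⁻¹ * q) (T1 P) := by
        rw [inv_mul_cancel₀ hq, Sop_eq_umbralEval]
    _ = umbralEval hh m q⁻¹ ((T1 P).eval₂ (Tq : SymF →+* SymF[X]) Polynomial.X) := by
      rw [eval₂_Tq_T1, umbralEval_comp_C_mul_X]
    _ = _ := by
      rw [eval₂_eq_sum_range, map_sum, Finset.smul_sum]
      exact Finset.sum_congr rfl fun i _ => (hterm i).symm
end
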